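/- Let G = (V, E, w) be a vertex-weighted graph with weight function w : V → ℤ⁺ and let k be an integer. If G has a wvi(k)-set, then G has an irredundant wvi(k)-set. -/
import Mathlib


namespace VI

open SimpleGraph

variable {V : Type*}

/-- Total weight of a set of vertices. -/
noncomputable def setWeight (w : V → ℕ) (X : Set V) : ℕ := ∑ᶠ v ∈ X, w v

/-- Maximum weight of a connected component of `G − S`. -/
noncomputable def compMax (G : SimpleGraph V) (w : V → ℕ) (S : Set V) : ℕ :=
  sSup {n | ∃ C : (G.induce Sᶜ).ConnectedComponent, n = setWeight w (Subtype.val '' C.supp)}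

/-- `w(S) + max_{C ∈ cc(G−S)} w(V(C))`. -/
noncomputable def viCost (G : SimpleGraph V) (w : V → ℕ) (S : Set V) : ℕ :=
  setWeight w S + compMax G w S

/-- The weighted vertex integrity of `G`. -/
noncomputable def wvi (G : SimpleGraph V) (w : V → ℕ) : ℕ := ⨅ S : Set V, viCost G w S

/-- Maximum number of vertices of a connected component of `G − S`. -/
noncomputable def uCompMax (G : SimpleGraph V) (S : Set V) : ℕ :=
  sSup {n | ∃ C : (G.induce Sᶜ).ConnectedComponent, n = C.supp.ncard}

/-- `|S| + max_{C ∈ cc(G−S)} |V(C)|`. -/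
noncomputable def uViCost (G : SimpleGraph V) (S : Set V) : ℕ := S.ncard + uCompMax G S

/-- The (unweighted) vertex integrity of `G`. -/
noncomputable def uvi (G : SimpleGraph V) : ℕ := ⨅ S : Set V, uViCost G S

/-- A vertex `v` is redundant w.r.t. `S` if at most one connected component of `G − S`
contains a neighbor of `v`. -/
def Redundant (G : SimpleGraph V) (S : Set V) (v : V) : Prop :=
  {C : (G.induce Sᶜ).ConnectedComponent | ∃ u : (Sᶜ : Set V), G.Adj v ↑u ∧ u ∈ C.supp}.Subsingleton

/-- `S` is irredundant if it contains no redundant vertex. -/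
def Irredundant (G : SimpleGraph V) (S : Set V) : Prop := ∀ v ∈ S, ¬ Redundant G S v

end VI

namespace VIAux

open VI SimpleGraph

variable {V : Type*} [Fintype V]

lemma setWeight_eq_sum (w : V → ℕ) (X : Set V) :
    setWeight w X = ∑ v ∈ X.toFinite.toFinset, w v := by
  rw [setWeight, ← finsum_mem_coe_finset, Set.Finite.coe_toFinset]

lemma setWeight_mono (w : V → ℕ) {X Y : Set V} (h : X ⊆ Y) :
    setWeight w X ≤ setWeight w Y := by
  rw [setWeight_eq_sum, setWeight_eq_sum]
  exact Finset.sum_le_sum_of_subset (Set.Finite.toFinset_subset_toFinset.mpr h)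

lemma setWeight_diff_add (w : V → ℕ) {S : Set V} {v : V} (hv : v ∈ S) :
    setWeight w (S \ {v}) + w v = setWeight w S := by
  classical
  rw [setWeight_eq_sum, setWeight_eq_sum]
  have he : (S \ {v}).toFinite.toFinset = S.toFinite.toFinset.erase v := by
    ext a
    simp only [Set.Finite.mem_toFinset, Finset.mem_erase, Set.mem_diff,
      Set.mem_singleton_iff, and_comm]
  rw [he]
  exact Finset.sum_erase_add _ _ (by simpa using hv)

lemma setWeight_insert_le (w : V → ℕ) (v : V) (X : Set V) :
    setWeight w (insert v X) ≤ w v + setWeight w X := by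
  classical
  rw [setWeight_eq_sum, setWeight_eq_sum]
  have he : (insert v X).toFinite.toFinset = insert v X.toFinite.toFinset := by
    ext a
    simp only [Set.Finite.mem_toFinset, Finset.mem_insert]
    exact Iff.rfl
  rw [he]
  by_cases hv : v ∈ X.toFinite.toFinset
  · rw [Finset.insert_eq_self.mpr hv]; exact le_add_self
  · rw [Finset.sum_insert hv]

lemma setWeight_singleton (w : V → ℕ) (v : V) : setWeight w {v} = w v := by
  rw [setWeight, finsum_mem_singleton]

lemma le_compMax (G : SimpleGraph V) (w : V → ℕ) (S : Set V)
    (C : (G.induce Sᶜ).ConnectedComponent) :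
    setWeight w (Subtype.val '' C.supp) ≤ compMax G w S := by
  refine le_csSup ⟨setWeight w Set.univ, ?_⟩ ⟨C, rfl⟩
  rintro n ⟨D, rfl⟩
  exact setWeight_mono w (Set.subset_univ _)

lemma reach_of_walk {G : SimpleGraph V} {A B : Set V} {u x : (B : Set V)}
    (p : (G.induce B).Walk u x) :
    ∀ (_ : ∀ y ∈ p.support, (y : V) ∈ A) (hu : (u : V) ∈ A) (hx : (x : V) ∈ A),
      (G.induce A).Reachable ⟨u, hu⟩ ⟨x, hx⟩ := by
  induction p with
  | nil => intro _ hu hx; exact Reachable.refl _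
  | @cons a b c h q ih =>
    intro hp hu hx
    have hb : (b : V) ∈ A := hp b (by simp)
    have hadj : (G.induce A).Adj ⟨a, hu⟩ ⟨b, hb⟩ := h
    exact (hadj.reachable).trans (ih (fun y hy => hp y (by simp [hy])) hb hx)

end VIAux

namespace VIAux
open VI SimpleGraph
variable {V : Type*} [Fintype V]

lemma key {G : SimpleGraph V} (w : V → ℕ) {S : Set V} {v : V}
    (hvS : v ∈ S) (hred : Redundant G S v) :
    viCost G w (S \ {v}) ≤ viCost G w S := by
  classical
  set S' := S \ {v} with hS'
  have hv' : v ∈ S'ᶜ := by simp [hS']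
  have hsub : ∀ y : V, y ∈ S'ᶜ → y ≠ v → y ∈ Sᶜ := by
    intro y hy hne
    simp only [hS', Set.mem_compl_iff, Set.mem_diff, Set.mem_singleton_iff, not_and,
      not_not] at hy ⊢
    intro hyS; exact hne (hy hyS)
  set R : Set ((G.induce Sᶜ).ConnectedComponent) :=
    {C | ∃ z : (Sᶜ : Set V), G.Adj v ↑z ∧ z ∈ C.supp} with hR
  -- vertices in the component of v are either v itself or lie in a component of R
  have P0 : ∀ (u t : (S'ᶜ : Set V)) (p : (G.induce S'ᶜ).Walk u t), (t : V) = v → (u : V) ≠ v →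
      ∃ C ∈ R, (u : V) ∈ Subtype.val '' C.supp := by
    intro u t p
    induction p with
    | nil => intro htv hne; exact absurd htv hne
    | @cons a b c h q ih =>
      intro htv hne
      have haS : (a : V) ∈ Sᶜ := hsub a a.2 hne
      by_cases hbv : (b : V) = v
      · -- a is adjacent to v
        have hadj : G.Adj v ↑a := by
          have h2 : G.Adj ↑a ↑b := h
          rw [hbv] at h2
          exact h2.symm
        refine ⟨(G.induce Sᶜ).connectedComponentMk ⟨↑a, haS⟩, ⟨⟨↑a, haS⟩, hadj, ?_⟩, ?_⟩
        · exact ConnectedComponent.mem_supp_iff _ _ |>.mpr rfl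
        · exact ⟨⟨↑a, haS⟩, ConnectedComponent.mem_supp_iff _ _ |>.mpr rfl, rfl⟩
      · obtain ⟨C, hCR, ⟨b', hb', hbb'⟩⟩ := ih htv hbv
        have hbS : (b : V) ∈ Sᶜ := hsub b b.2 hbv
        refine ⟨C, hCR, ⟨⟨↑a, haS⟩, ?_, rfl⟩⟩
        have hadj : (G.induce Sᶜ).Adj ⟨↑a, haS⟩ ⟨↑b, hbS⟩ := h
        have hb2 : b' = ⟨↑b, hbS⟩ := Subtype.ext hbb'
        rw [ConnectedComponent.mem_supp_iff] at hb' ⊢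
        rw [ConnectedComponent.eq.mpr hadj.reachable, ← hb2]
        exact hb'
  have hmain : compMax G w S' ≤ w v + compMax G w S := by
    refine csSup_le ⟨_, ⟨(G.induce S'ᶜ).connectedComponentMk ⟨v, hv'⟩, rfl⟩⟩ ?_
    rintro n ⟨D, rfl⟩
    by_cases hvD : (⟨v, hv'⟩ : (S'ᶜ : Set V)) ∈ D.supp
    · -- D is the component of v
      by_cases hRne : R.Nonempty
      · obtain ⟨C₀, hC₀⟩ := hRne
        have hsub2 : Subtype.val '' D.supp ⊆ insert v (Subtype.val '' C₀.supp) := by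
          rintro _ ⟨u, hu, rfl⟩
          by_cases huv : (u : V) = v
          · exact Or.inl huv
          · have hre : (G.induce S'ᶜ).Reachable u ⟨v, hv'⟩ := by
              rw [ConnectedComponent.mem_supp_iff] at hu hvD
              exact ConnectedComponent.eq.mp (hu.trans hvD.symm)
            obtain ⟨C, hCR, hmem⟩ := P0 u ⟨v, hv'⟩ hre.some rfl huv
            have : C = C₀ := hred hCR hC₀
            exact Or.inr (this ▸ hmem)
        calc setWeight w (Subtype.val '' D.supp)
            ≤ setWeight w (insert v (Subtype.val '' C₀.supp)) := setWeight_mono w hsub2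
          _ ≤ w v + setWeight w (Subtype.val '' C₀.supp) := setWeight_insert_le w _ _
          _ ≤ w v + compMax G w S := by
              exact Nat.add_le_add_left (le_compMax G w S C₀) _
      · have hsub2 : Subtype.val '' D.supp ⊆ {v} := by
          rintro _ ⟨u, hu, rfl⟩
          by_cases huv : (u : V) = v
          · exact huv
          · have hre : (G.induce S'ᶜ).Reachable u ⟨v, hv'⟩ := by
              rw [ConnectedComponent.mem_supp_iff] at hu hvD
              exact ConnectedComponent.eq.mp (hu.trans hvD.symm)
            obtain ⟨C, hCR, -⟩ := P0 u ⟨v, hv'⟩ hre.some rfl huv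
            exact absurd ⟨C, hCR⟩ hRne
        calc setWeight w (Subtype.val '' D.supp) ≤ setWeight w {v} := setWeight_mono w hsub2
          _ = w v := setWeight_singleton w v
          _ ≤ w v + compMax G w S := Nat.le_add_right _ _
    · -- D avoids v : it maps into a component of G − S
      obtain ⟨x, hx⟩ := D.exists_rep
      have hxD : x ∈ D.supp := (ConnectedComponent.mem_supp_iff _ _).mpr hx
      have hxv : (x : V) ≠ v := by
        intro hxv
        have : (⟨v, hv'⟩ : (S'ᶜ : Set V)) = x := Subtype.ext hxv.symm
        exact hvD (this ▸ hxD)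
      have hxS : (x : V) ∈ Sᶜ := hsub x x.2 hxv
      have hsub2 : Subtype.val '' D.supp ⊆
          Subtype.val '' ((G.induce Sᶜ).connectedComponentMk ⟨↑x, hxS⟩).supp := by
        rintro _ ⟨u, hu, rfl⟩
        rw [ConnectedComponent.mem_supp_iff, ← hx] at hu
        have hre : (G.induce S'ᶜ).Reachable u x := ConnectedComponent.eq.mp hu
        obtain ⟨p⟩ := hre
        have hps : ∀ y ∈ p.support, (y : V) ∈ Sᶜ := by
          intro y hy
          have hry : (G.induce S'ᶜ).Reachable u y := ⟨p.takeUntil y hy⟩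
          have hyD : y ∈ D.supp := by
            rw [ConnectedComponent.mem_supp_iff, ← hx, ← hu]
            exact (ConnectedComponent.eq.mpr hry).symm
          have hyv : (y : V) ≠ v := by
            intro hyv
            have : (⟨v, hv'⟩ : (S'ᶜ : Set V)) = y := Subtype.ext hyv.symm
            exact hvD (this ▸ hyD)
          exact hsub y y.2 hyv
        have := reach_of_walk p hps (hps u p.start_mem_support) hxS
        refine ⟨⟨↑u, hps u p.start_mem_support⟩, ?_, rfl⟩
        rw [ConnectedComponent.mem_supp_iff]
        exact ConnectedComponent.eq.mpr this
      calc setWeight w (Subtype.val '' D.supp)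
          ≤ setWeight w (Subtype.val '' ((G.induce Sᶜ).connectedComponentMk ⟨↑x, hxS⟩).supp) :=
            setWeight_mono w hsub2
        _ ≤ compMax G w S := le_compMax G w S _
        _ ≤ w v + compMax G w S := Nat.le_add_left _ _
  have hdiff := setWeight_diff_add w hvS
  calc viCost G w S' = setWeight w S' + compMax G w S' := rfl
    _ ≤ setWeight w S' + (w v + compMax G w S) := Nat.add_le_add_left hmain _
    _ = (setWeight w S' + w v) + compMax G w S := by ring
    _ = setWeight w S + compMax G w S := by rw [hdiff]
    _ = viCost G w S := rfl

end VIAux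



open VI SimpleGraph in
/-- A graph with a `wvi(k)`-set has an irredundant `wvi(k)`-set. -/
theorem statement1 {V : Type*} [Fintype V] (G : SimpleGraph V) (w : V → ℕ)
    (hw : ∀ v : V, 0 < w v) (k : ℕ)
    (h : ∃ S : Set V, viCost G w S ≤ k) :
    ∃ S : Set V, Irredundant G S ∧ viCost G w S ≤ k := by
  classical
  obtain ⟨S, hS⟩ := h
  suffices H : ∀ n : ℕ, ∀ S : Set V, S.ncard ≤ n → viCost G w S ≤ k →
      ∃ T : Set V, Irredundant G T ∧ viCost G w T ≤ k from H S.ncard S le_rfl hS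
  intro n
  induction n with
  | zero =>
    intro S hcard hS
    have hSe : S = ∅ := by
      rw [← Set.ncard_eq_zero S.toFinite]
      omega
    subst hSe
    exact ⟨∅, fun v hv => absurd hv (Set.notMem_empty v), hS⟩
  | succ n ih =>
    intro S hcard hS
    by_cases hirr : Irredundant G S
    · exact ⟨S, hirr, hS⟩
    · simp only [Irredundant, not_forall, not_not] at hirr
      obtain ⟨v, hvS, hred⟩ := hirr
      refine ih (S \ {v}) ?_ (le_trans (VIAux.key w hvS hred) hS)
      have := Set.ncard_diff_singleton_lt_of_mem hvS S.toFinite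
      omega
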